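/- Two level-term normal forms are equal in the free level semilattice on n generators if and only if they denote the same function under every interpretation of the generators in ℕ (with ⊔ interpreted as max and suc as successor); equivalently, the quotient of level terms by the level-semilattice equations embeds into the level semilattice of functions ℕⁿ → ℕ. -/

import Mathlib

/-- Level terms over `n` generators. -/
inductive LTerm (n : ℕ) : Type
  | var : Fin n → LTerm n
  | sup : LTerm n → LTerm n → LTerm n
  | suc : LTerm n → LTerm n

/-- The congruence generated by the level-semilattice equations. -/
inductive LEq {n : ℕ} : LTerm n → LTerm n → Prop
  | refl (t) : LEq t t
  | symm {t u} : LEq t u → LEq u t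
  | trans {t u v} : LEq t u → LEq u v → LEq t v
  | supCongr {t t' u u'} : LEq t t' → LEq u u' → LEq (LTerm.sup t u) (LTerm.sup t' u')
  | sucCongr {t t'} : LEq t t' → LEq (LTerm.suc t) (LTerm.suc t')
  | supAssoc (t u v) : LEq (LTerm.sup (LTerm.sup t u) v) (LTerm.sup t (LTerm.sup u v))
  | supComm (t u) : LEq (LTerm.sup t u) (LTerm.sup u t)
  | supIdem (t) : LEq (LTerm.sup t t) t
  | supSuc (t) : LEq (LTerm.sup t (LTerm.suc t)) (LTerm.suc t)
  | sucSup (t u) : LEq (LTerm.suc (LTerm.sup t u)) (LTerm.sup (LTerm.suc t) (LTerm.suc u))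

/-- Interpretation of a level term in ℕ, with `⊔` as `max` and `suc` as successor. -/
def eval {n : ℕ} (ρ : Fin n → ℕ) : LTerm n → ℕ
  | LTerm.var j => ρ j
  | LTerm.sup t u => max (eval ρ t) (eval ρ u)
  | LTerm.suc t => eval ρ t + 1

/-!
Every level term is, up to the equations, the join of its *atoms* `suc^[k] (var j)`, and it
evaluates to the maximum of `ρ j + k` over them. If `⟦t⟧ ≤ ⟦u⟧` pointwise, testing at the
valuation that sends `α_j` to a large number and every other generator to `0` shows that each
atom `suc^[k] (var j)` of `t` lies below an atom `suc^[k'] (var j)` of `u` with `k ≤ k'`, so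
`t ≤ u` in the derived order `t ≤ u :↔ t ⊔ u = u`. Antisymmetry of that order gives the
claim.
-/

theorem LEq.eval_eq {n : ℕ} {t u : LTerm n} (h : LEq t u) (ρ : Fin n → ℕ) :
    eval ρ t = eval ρ u := by
  induction h with
  | refl => rfl
  | symm _ ih => exact ih.symm
  | trans _ _ ih₁ ih₂ => exact ih₁.trans ih₂
  | supCongr _ _ ih₁ ih₂ => simp only [eval, ih₁, ih₂]
  | sucCongr _ ih => simp only [eval, ih]
  | supAssoc => exact max_assoc _ _ _
  | supComm => exact max_comm _ _
  | supIdem => exact max_self _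
  | supSuc => exact max_eq_right (Nat.le_succ _)
  | sucSup => exact Nat.succ_max_succ _ _ |>.symm

namespace LTerm

variable {n : ℕ}

instance : Preorder (LTerm n) where
  le t u := LEq (sup t u) u
  le_refl t := LEq.supIdem t
  le_trans t u v htu huv :=
    (LEq.supCongr (LEq.refl t) huv.symm).trans
      ((LEq.supAssoc t u v).symm.trans ((LEq.supCongr htu (LEq.refl v)).trans huv))

theorem _root_.LEq.le {t u : LTerm n} (h : LEq t u) : t ≤ u :=
  (LEq.supCongr h (LEq.refl u)).trans (LEq.supIdem u)

theorem _root_.LEq.of_le_of_le {t u : LTerm n} (htu : t ≤ u) (hut : u ≤ t) : LEq t u :=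
  (hut.symm.trans (LEq.supComm u t)).trans htu

protected theorem le_sup_left (t u : LTerm n) : t ≤ sup t u :=
  (LEq.supAssoc t t u).symm.trans (LEq.supCongr (LEq.supIdem t) (LEq.refl u))

protected theorem le_sup_right (t u : LTerm n) : u ≤ sup t u :=
  ((LEq.supComm u (sup t u)).trans (LEq.supAssoc t u u)).trans
    (LEq.supCongr (LEq.refl t) (LEq.supIdem u))

protected theorem sup_le {t u v : LTerm n} (htv : t ≤ v) (huv : u ≤ v) : sup t u ≤ v :=
  ((LEq.supAssoc t u v).trans (LEq.supCongr (LEq.refl t) huv)).trans htv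

theorem le_suc (t : LTerm n) : t ≤ suc t := LEq.supSuc t

theorem suc_le_suc {t u : LTerm n} (h : t ≤ u) : suc t ≤ suc u :=
  (LEq.sucSup t u).symm.trans (LEq.sucCongr h)

theorem le_iterate_suc (t : LTerm n) (k : ℕ) : t ≤ suc^[k] t := by
  induction k with
  | zero => exact le_rfl
  | succ k ih => exact ih.trans (Function.iterate_succ_apply' suc k t ▸ le_suc _)

theorem iterate_suc_le_iterate_suc {k m : ℕ} (h : k ≤ m) (t : LTerm n) :
    suc^[k] t ≤ suc^[m] t := by
  obtain ⟨d, rfl⟩ := Nat.exists_eq_add_of_le' h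
  rw [Function.iterate_add_apply]
  exact le_iterate_suc _ d

theorem _root_.LEq.iterate_suc_sup (k : ℕ) (t u : LTerm n) :
    LEq (suc^[k] (sup t u)) (sup (suc^[k] t) (suc^[k] u)) := by
  induction k with
  | zero => exact LEq.refl _
  | succ k ih =>
    simp only [Function.iterate_succ_apply']
    exact (LEq.sucCongr ih).trans (LEq.sucSup _ _)

/-- The atom `(j, k)` stands for `suc^[k] (var j)`. -/
def atoms : LTerm n → List (Fin n × ℕ)
  | var j => [(j, 0)]
  | sup t u => atoms t ++ atoms u
  | suc t => (atoms t).map fun a => (a.1, a.2 + 1)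

theorem iterate_suc_var_le_of_mem_atoms {u : LTerm n} {a : Fin n × ℕ} (ha : a ∈ atoms u) :
    suc^[a.2] (var a.1) ≤ u := by
  induction u generalizing a with
  | var j =>
    obtain rfl : a = (j, 0) := List.mem_singleton.mp ha
    exact le_rfl
  | sup t u iht ihu =>
    rcases List.mem_append.mp ha with ha | ha
    · exact (iht ha).trans (LTerm.le_sup_left t u)
    · exact (ihu ha).trans (LTerm.le_sup_right t u)
  | suc t ih =>
    obtain ⟨b, hb, rfl⟩ := List.mem_map.mp ha
    rw [Function.iterate_succ_apply']
    exact suc_le_suc (ih hb)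

theorem le_eval_of_mem_atoms (ρ : Fin n → ℕ) {u : LTerm n} {a : Fin n × ℕ}
    (ha : a ∈ atoms u) : ρ a.1 + a.2 ≤ eval ρ u := by
  induction u generalizing a with
  | var j =>
    obtain rfl : a = (j, 0) := List.mem_singleton.mp ha
    rfl
  | sup t u iht ihu =>
    rcases List.mem_append.mp ha with ha | ha
    · exact (iht ha).trans (le_max_left _ _)
    · exact (ihu ha).trans (le_max_right _ _)
  | suc t ih =>
    obtain ⟨b, hb, rfl⟩ := List.mem_map.mp ha
    exact Nat.succ_le_succ (ih hb)

theorem exists_mem_atoms_eval_eq (ρ : Fin n → ℕ) (u : LTerm n) :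
    ∃ a ∈ atoms u, eval ρ u = ρ a.1 + a.2 := by
  induction u with
  | var j => exact ⟨(j, 0), List.mem_singleton_self _, rfl⟩
  | sup t u iht ihu =>
    obtain ⟨a, ha, hta⟩ := iht
    obtain ⟨b, hb, hub⟩ := ihu
    rcases le_total (eval ρ t) (eval ρ u) with h | h
    · exact ⟨b, List.mem_append_right _ hb, (max_eq_right h).trans hub⟩
    · exact ⟨a, List.mem_append_left _ ha, (max_eq_left h).trans hta⟩
  | suc t ih =>
    obtain ⟨a, ha, hta⟩ := ih
    exact ⟨(a.1, a.2 + 1), List.mem_map_of_mem ha, by simp only [eval, hta]; rfl⟩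

theorem exists_mem_atoms_of_forall_le_eval {u : LTerm n} {j : Fin n} {k : ℕ}
    (h : ∀ ρ : Fin n → ℕ, ρ j + k ≤ eval ρ u) :
    ∃ a ∈ atoms u, a.1 = j ∧ k ≤ a.2 := by
  -- `B` exceeds every offset of an atom of `u`, so only atoms at `α_j` can reach `B + k`.
  set B := eval 0 u + 1
  obtain ⟨a, ha, hua⟩ := exists_mem_atoms_eval_eq (Pi.single j B) u
  have hk := hua ▸ h (Pi.single j B)
  have hoffset : a.2 < B := Nat.lt_succ_of_le ((le_eval_of_mem_atoms 0 ha).trans' (by simp))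
  by_cases haj : a.1 = j
  · subst haj
    simp only [Pi.single_eq_same, add_le_add_iff_left] at hk
    exact ⟨a, ha, rfl, hk⟩
  · simp only [Pi.single_eq_same, Pi.single_eq_of_ne haj, zero_add] at hk
    omega

theorem iterate_suc_var_le_of_forall_le_eval {u : LTerm n} {j : Fin n} {k : ℕ}
    (h : ∀ ρ : Fin n → ℕ, ρ j + k ≤ eval ρ u) : suc^[k] (var j) ≤ u := by
  obtain ⟨a, ha, rfl, hk⟩ := exists_mem_atoms_of_forall_le_eval h
  exact (iterate_suc_le_iterate_suc hk _).trans (iterate_suc_var_le_of_mem_atoms ha)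

theorem iterate_suc_le_of_forall_le_eval {t u : LTerm n} {k : ℕ}
    (h : ∀ ρ : Fin n → ℕ, eval ρ t + k ≤ eval ρ u) : suc^[k] t ≤ u := by
  induction t generalizing k with
  | var j => exact iterate_suc_var_le_of_forall_le_eval h
  | sup t t' iht iht' =>
    refine (LEq.iterate_suc_sup k t t').le.trans
      (LTerm.sup_le (iht fun ρ => ?_) (iht' fun ρ => ?_))
    · exact (Nat.add_le_add_right (le_max_left _ _) k).trans (h ρ)
    · exact (Nat.add_le_add_right (le_max_right _ _) k).trans (h ρ)
  | suc t ih =>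
    rw [← Function.iterate_succ_apply]
    exact ih fun ρ => (Nat.add_right_comm _ _ _).trans_le (h ρ)

theorem le_of_forall_eval_le {t u : LTerm n} (h : ∀ ρ : Fin n → ℕ, eval ρ t ≤ eval ρ u) :
    t ≤ u :=
  iterate_suc_le_of_forall_le_eval (k := 0) h

end LTerm

theorem stmt_13 {n : ℕ} (t u : LTerm n) :
    LEq t u ↔ ∀ ρ : Fin n → ℕ, eval ρ t = eval ρ u :=
  ⟨LEq.eval_eq, fun h => LEq.of_le_of_le (LTerm.le_of_forall_eval_le fun ρ => (h ρ).le)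
    (LTerm.le_of_forall_eval_le fun ρ => (h ρ).ge)⟩
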